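/- Let α and d be real numbers with 0 < α < π and d ≥ 0, and let θ be any real number. Then in ℝ² the phasor sum for the even topology, P(θ) = (d/(2 sin α)) • (−1, 0) + (d/(2 sin α)) • (cos 2θ, sin 2θ) + (1/cos(α/2)) • (−sin θ, cos θ), satisfies P(θ) = (1/cos(α/2) − (d/sin α) · cos(θ + π/2)) • (cos(θ + π/2), sin(θ + π/2)). Consequently, in polar coordinates with pole at the origin and polar angle φ = θ + π/2, the locus of points P(θ) is given by the limaçon r(φ) = sec(α/2) − d csc(α) cos(φ). -/

import Mathlib

/-!
The first two phasors have the same length `r = d / (2 sin α)`, and their sum is the chord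
`r ((cos 2θ, sin 2θ) - (1, 0)) = 2 r sin θ (-sin θ, cos θ)` of the auxiliary circle, which is
parallel to the third phasor. So the whole sum is a multiple of the unit vector
`(-sin θ, cos θ) = (cos φ, sin φ)` with `φ = θ + π / 2`, with signed length
`sec (α / 2) + 2 r sin θ = sec (α / 2) - d csc α cos φ`.
-/

open Real

def pt (a b : ℝ) : EuclideanSpace ℝ (Fin 2) := WithLp.toLp 2 ![a, b]

lemma pt_add (a b a' b' : ℝ) : pt a b + pt a' b' = pt (a + a') (b + b') := by
  ext i; fin_cases i <;> simp [pt]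

lemma smul_pt (r a b : ℝ) : r • pt a b = pt (r * a) (r * b) := by
  ext i; fin_cases i <;> simp [pt]

lemma pt_neg_one_zero_add_pt_cos_sin_two_mul (θ : ℝ) :
    pt (-1) 0 + pt (cos (2 * θ)) (sin (2 * θ)) = (2 * sin θ) • pt (-sin θ) (cos θ) := by
  rw [pt_add, smul_pt, cos_two_mul', sin_two_mul]
  congr 1
  · linear_combination sin_sq_add_cos_sq θ
  · ring

lemma pt_cos_sin_add_pi_div_two (θ : ℝ) :
    pt (cos (θ + π / 2)) (sin (θ + π / 2)) = pt (-sin θ) (cos θ) := by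
  rw [cos_add_pi_div_two, sin_add_pi_div_two]

theorem limacon_even_topology_general
    (α d θ : ℝ) :
    (d / (2 * Real.sin α)) • pt (-1) 0 +
      (d / (2 * Real.sin α)) • pt (Real.cos (2 * θ)) (Real.sin (2 * θ)) +
      (1 / Real.cos (α / 2)) • pt (-Real.sin θ) (Real.cos θ) =
    (1 / Real.cos (α / 2) - (d / Real.sin α) * Real.cos (θ + π / 2)) •
      pt (Real.cos (θ + π / 2)) (Real.sin (θ + π / 2)) := by
  have hr : d / sin α = 2 * (d / (2 * sin α)) := by ring
  rw [← smul_add, pt_neg_one_zero_add_pt_cos_sin_two_mul, smul_smul, ← add_smul,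
    pt_cos_sin_add_pi_div_two, cos_add_pi_div_two, hr]
  congr 1
  ring

/-- **The limaçon of Steiner points, even topology.**
The phasor sum `P(θ) = (d/(2 sin α)) • (−1,0) + (d/(2 sin α)) • (cos 2θ, sin 2θ)
+ (1/cos(α/2)) • (−sin θ, cos θ)` equals
`(1/cos(α/2) − (d/sin α)·cos(θ+π/2)) • (cos(θ+π/2), sin(θ+π/2))`; hence in polar
coordinates with polar angle `φ = θ + π/2` the locus of potential Steiner points is the
limaçon `r(φ) = sec(α/2) − d csc(α) cos φ`. -/
theorem limacon_even_topology
    (α d θ : ℝ) (hα₀ : 0 < α) (hα₁ : α < π) (hd : 0 ≤ d) :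
    (d / (2 * Real.sin α)) • pt (-1) 0 +
      (d / (2 * Real.sin α)) • pt (Real.cos (2 * θ)) (Real.sin (2 * θ)) +
      (1 / Real.cos (α / 2)) • pt (-Real.sin θ) (Real.cos θ) =
    (1 / Real.cos (α / 2) - (d / Real.sin α) * Real.cos (θ + π / 2)) •
      pt (Real.cos (θ + π / 2)) (Real.sin (θ + π / 2)) :=
  limacon_even_topology_general α d θ
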